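/- Entropy continuity under variational distance (finite alphabets): if p and q are pmfs on a finite set X of size m ≥ 4 with V(p,q) ≤ μ ≤ 1/2, then |H(p) − H(q)| ≤ μ log(m/μ). Consequently, for conditional entropies of jointly distributed pairs: if V(p_{XY}, q_{XY}) ≤ μ ≤ 1/2 on X × Y, then |H_p(X|Y) − H_q(X|Y)| ≤ 2μ log(|X||Y|/μ). -/

import Mathlib

/-!
Write `η = negMulLog`. For `0 ≤ x ≤ y ≤ 1` with `y - x ≤ 1/2` one has `|η x - η y| ≤ η (y - x)`:
from above by subadditivity of `η`, from below by concavity of `η` together with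
`η (1 - d) ≤ η d` for `d ≤ 1/2`. Summing over the alphabet and applying Jensen to the
differences `|p a - q a|`, of total `D ≤ μ`, gives (in nats) `|H p - H q| ≤ D log m + η D`, which is
increasing in `D` on `[0, 1/2]` as soon as `m ≥ 2`. For the conditional entropy
`H(X|Y) = H(X,Y) - H(Y)`, apply this to the joint laws and to the `Y`-marginals, whose
variational distance is at most that of the joint laws.
-/

open Finset

noncomputable def entropy {α : Type*} [Fintype α] (p : α → ℝ) : ℝ :=
  -∑ a, p a * Real.logb 2 (p a)

open Real

lemma ConcaveOn.map_add_map_le {f : ℝ → ℝ} {s : Set ℝ} (hf : ConcaveOn ℝ s f) {a b t : ℝ}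
    (ha : a ∈ s) (hb : b ∈ s) (ht0 : 0 ≤ t) (ht1 : t ≤ 1) :
    f a + f b ≤ f (t * a + (1 - t) * b) + f ((1 - t) * a + t * b) := by
  have h1 := hf.2 ha hb ht0 (sub_nonneg.2 ht1) (add_sub_cancel t 1)
  have h2 := hf.2 ha hb (sub_nonneg.2 ht1) ht0 (sub_add_cancel 1 t)
  simp only [smul_eq_mul] at h1 h2
  linarith

namespace Real

lemma negMulLog_add_le {x y : ℝ} (hx : 0 ≤ x) (hy : 0 ≤ y) :
    negMulLog (x + y) ≤ negMulLog x + negMulLog y := by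
  rcases hx.eq_or_lt with rfl | hx
  · simp
  rcases hy.eq_or_lt with rfl | hy
  · simp
  have hlx : log x ≤ log (x + y) := log_le_log hx (by linarith)
  have hly : log y ≤ log (x + y) := log_le_log hy (by linarith)
  simp only [negMulLog, neg_mul]
  nlinarith

lemma negMulLog_one_sub_le {d : ℝ} (hd0 : 0 ≤ d) (hd : d ≤ 1 / 2) :
    negMulLog (1 - d) ≤ negMulLog d := by
  set k : ℝ → ℝ := fun t => negMulLog (1 - t) - negMulLog t
  have hk' : ∀ t ∈ Set.Ioo (0 : ℝ) (1 / 2), HasDerivAt k (log t + log (1 - t) + 2) t := by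
    intro t ht
    have h1t : 1 - t ≠ 0 := by linarith [ht.2]
    exact (((hasDerivAt_negMulLog h1t).comp t ((hasDerivAt_id t).const_sub 1)).sub
      (hasDerivAt_negMulLog ht.1.ne')).congr_deriv (by ring)
  -- `k' t = log (t (1 - t)) + 2` increases on `(0, 1/2)`, so `k` is convex and vanishes at both ends.
  have hconv : ConvexOn ℝ (Set.Icc 0 (1 / 2)) k := by
    refine MonotoneOn.convexOn_of_deriv (convex_Icc _ _) (by fun_prop) ?_ ?_ <;>
      rw [interior_Icc]
    · exact fun t ht => (hk' t ht).differentiableAt.differentiableWithinAt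
    · intro a ha b hb hab
      rw [(hk' a ha).deriv, (hk' b hb).deriv, ← log_mul ha.1.ne' (by linarith [ha.2]),
        ← log_mul hb.1.ne' (by linarith [hb.2])]
      have : a * (1 - a) ≤ b * (1 - b) := by nlinarith [ha.2, hb.2]
      linarith [log_le_log (by nlinarith [ha.1, ha.2]) this]
  have := hconv.le_on_segment (x := 0) (y := 1 / 2) (by norm_num) (by norm_num)
    (by rw [segment_eq_Icc (by norm_num)]; exact ⟨hd0, hd⟩)
  norm_num [k] at this
  linarith

lemma abs_negMulLog_sub_le {x y : ℝ} (hx0 : 0 ≤ x) (hx1 : x ≤ 1) (hy0 : 0 ≤ y) (hy1 : y ≤ 1)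
    (hxy : |x - y| ≤ 1 / 2) : |negMulLog x - negMulLog y| ≤ negMulLog |x - y| := by
  wlog hle : x ≤ y generalizing x y
  · rw [abs_sub_comm, abs_sub_comm x]
    exact this hy0 hy1 hx0 hx1 (by rwa [abs_sub_comm]) (le_of_not_ge hle)
  rw [abs_sub_comm x y, abs_of_nonneg (sub_nonneg.2 hle)] at hxy ⊢
  rcases hx1.eq_or_lt with rfl | hx1
  · rw [le_antisymm hy1 hle, sub_self, sub_self, abs_zero, negMulLog_zero]
  -- Spreading `y, 1 - (y - x)` apart to `x, 1` decreases the concave sum `negMulLog + negMulLog`.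
  have hspread : negMulLog x ≤ negMulLog y + negMulLog (1 - (y - x)) := by
    have h := concaveOn_negMulLog.map_add_map_le hx0 (zero_le_one' ℝ)
      (div_nonneg (sub_nonneg.2 hy1) (sub_pos.2 hx1).le)
      ((div_le_one (sub_pos.2 hx1)).2 (by linarith))
    rw [negMulLog_one, add_zero] at h
    convert h using 3 <;> field_simp <;> ring
  have hsub := negMulLog_add_le hx0 (sub_nonneg.2 hle)
  rw [add_sub_cancel] at hsub
  rw [abs_sub_le_iff]
  constructor
  · linarith [negMulLog_one_sub_le (sub_nonneg.2 hle) hxy]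
  · linarith

lemma sum_negMulLog_le {γ : Type*} [Fintype γ] [Nonempty γ] {d : γ → ℝ} (hd : ∀ a, 0 ≤ d a) :
    ∑ a, negMulLog (d a) ≤ (∑ a, d a) * log (Fintype.card γ) + negMulLog (∑ a, d a) := by
  set M : ℝ := (Fintype.card γ : ℝ)
  have hM : 0 < M := Nat.cast_pos.2 Fintype.card_pos
  have hJensen := concaveOn_negMulLog.le_map_sum (t := univ) (w := fun _ => M⁻¹) (p := d)
    (fun _ _ => inv_nonneg.2 hM.le) (by simp [M, hM.ne']) (fun a _ => hd a)
  simp only [smul_eq_mul, ← mul_sum] at hJensen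
  calc ∑ a, negMulLog (d a) = M * (M⁻¹ * ∑ a, negMulLog (d a)) := by field_simp
    _ ≤ M * negMulLog (M⁻¹ * ∑ a, d a) := by gcongr
    _ = (∑ a, d a) * log M + negMulLog (∑ a, d a) := by
      rw [negMulLog_mul, negMulLog, log_inv]
      field_simp

lemma monotoneOn_mul_log_add_negMulLog {M : ℝ} (hM : 2 ≤ M) :
    MonotoneOn (fun t => t * log M + negMulLog t) (Set.Icc 0 (1 / 2)) := by
  have hderiv (t : ℝ) (ht : t ∈ Set.Ioo 0 (1 / 2)) :
      HasDerivAt (fun t => t * log M + negMulLog t) (log M - log t - 1) t :=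
    (((hasDerivAt_id t).mul_const (log M)).add (hasDerivAt_negMulLog ht.1.ne')).congr_deriv
      (by ring)
  refine monotoneOn_of_deriv_nonneg (convex_Icc _ _) (by fun_prop) ?_ ?_ <;> rw [interior_Icc]
  · exact fun t ht => (hderiv t ht).differentiableAt.differentiableWithinAt
  · intro t ht
    rw [(hderiv t ht).deriv]
    have hlogM : log 2 ≤ log M := log_le_log two_pos hM
    have hlogt : log t ≤ log (1 / 2) := log_le_log ht.1 ht.2.le
    rw [one_div, log_inv] at hlogt
    linarith [log_two_gt_d9]

lemma abs_sum_negMulLog_sub_le {γ : Type*} [Fintype γ] {p q : γ → ℝ}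
    (hp0 : ∀ a, 0 ≤ p a) (hq0 : ∀ a, 0 ≤ q a) (hp1 : ∑ a, p a = 1) (hq1 : ∑ a, q a = 1)
    {μ : ℝ} (hμ : μ ≤ 1 / 2) (hV : ∑ a, |p a - q a| ≤ μ) :
    |∑ a, negMulLog (p a) - ∑ a, negMulLog (q a)| ≤ μ * log (Fintype.card γ / μ) := by
  have hμ0 : 0 ≤ μ := (sum_nonneg fun a _ => abs_nonneg _).trans hV
  have : Nonempty γ := univ_nonempty_iff.1 (nonempty_of_sum_ne_zero (hp1.trans_ne one_ne_zero))
  have hrhs : μ * log (Fintype.card γ / μ) = μ * log (Fintype.card γ) + negMulLog μ := by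
    rcases hμ0.eq_or_lt with rfl | hμ0
    · simp
    rw [log_div (by positivity) hμ0.ne', negMulLog]
    ring
  rw [hrhs]
  -- The monotonicity step below needs `card γ ≥ 2`; on one point `p = q`.
  obtain hcard | hcard : Fintype.card γ = 1 ∨ 2 ≤ Fintype.card γ := by
    have := Fintype.card_pos (α := γ)
    omega
  · obtain ⟨_⟩ := Fintype.card_eq_one_iff_nonempty_unique.1 hcard
    have hpq : p = q := funext fun a => by
      rw [Subsingleton.elim a default, ← Fintype.sum_unique p, ← Fintype.sum_unique q, hp1, hq1]
    rw [hpq, sub_self, abs_zero, hcard, Nat.cast_one, log_one, mul_zero, zero_add]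
    exact negMulLog_nonneg hμ0 (by linarith)
  have hle_one {r : γ → ℝ} (hr0 : ∀ a, 0 ≤ r a) (hr1 : ∑ a, r a = 1) (a : γ) : r a ≤ 1 :=
    hr1 ▸ single_le_sum (fun b _ => hr0 b) (mem_univ a)
  have hd (a : γ) : |p a - q a| ≤ 1 / 2 :=
    ((single_le_sum (fun b _ => abs_nonneg (p b - q b)) (mem_univ a)).trans hV).trans hμ
  have hV0 : 0 ≤ ∑ a, |p a - q a| := sum_nonneg fun a _ => abs_nonneg _
  calc |∑ a, negMulLog (p a) - ∑ a, negMulLog (q a)|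
      ≤ ∑ a, |negMulLog (p a) - negMulLog (q a)| := by
        rw [← sum_sub_distrib]
        exact abs_sum_le_sum_abs _ _
    _ ≤ ∑ a, negMulLog |p a - q a| := sum_le_sum fun a _ =>
        abs_negMulLog_sub_le (hp0 a) (hle_one hp0 hp1 a) (hq0 a) (hle_one hq0 hq1 a) (hd a)
    _ ≤ (∑ a, |p a - q a|) * log (Fintype.card γ) + negMulLog (∑ a, |p a - q a|) :=
        sum_negMulLog_le fun a => abs_nonneg _
    _ ≤ μ * log (Fintype.card γ) + negMulLog μ :=
        monotoneOn_mul_log_add_negMulLog (by exact_mod_cast hcard) ⟨hV0, hV.trans hμ⟩ ⟨hμ0, hμ⟩ hV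

end Real

lemma entropy_eq_sum_negMulLog_div {α : Type*} [Fintype α] (p : α → ℝ) :
    entropy p = (∑ a, negMulLog (p a)) / log 2 := by
  simp only [entropy, negMulLog, logb, sum_div, ← sum_neg_distrib]
  exact sum_congr rfl fun a _ => by ring

theorem abs_entropy_sub_le {α : Type*} [Fintype α] {p q : α → ℝ}
    (hp0 : ∀ a, 0 ≤ p a) (hq0 : ∀ a, 0 ≤ q a) (hp1 : ∑ a, p a = 1) (hq1 : ∑ a, q a = 1)
    {μ : ℝ} (hμ : μ ≤ 1 / 2) (hV : ∑ a, |p a - q a| ≤ μ) :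
    |entropy p - entropy q| ≤ μ * logb 2 (Fintype.card α / μ) := by
  have hlog2 : 0 < log 2 := log_pos one_lt_two
  rw [entropy_eq_sum_negMulLog_div, entropy_eq_sum_negMulLog_div, ← sub_div, abs_div,
    abs_of_pos hlog2, logb, ← mul_div_assoc]
  exact div_le_div_of_nonneg_right (abs_sum_negMulLog_sub_le hp0 hq0 hp1 hq1 hμ hV) hlog2.le

lemma sum_abs_sub_marginal_le {α β : Type*} [Fintype α] [Fintype β] (p q : α × β → ℝ) :
    ∑ y, |∑ x, p (x, y) - ∑ x, q (x, y)| ≤ ∑ w, |p w - q w| := by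
  rw [Fintype.sum_prod_type_right]
  refine sum_le_sum fun y _ => ?_
  rw [← sum_sub_distrib]
  exact abs_sum_le_sum_abs _ _

theorem abs_condEntropy_sub_le {α β : Type*} [Fintype α] [Fintype β] {p q : α × β → ℝ}
    (hp0 : ∀ w, 0 ≤ p w) (hq0 : ∀ w, 0 ≤ q w) (hp1 : ∑ w, p w = 1) (hq1 : ∑ w, q w = 1)
    {μ : ℝ} (hμ : μ ≤ 1 / 2) (hV : ∑ w, |p w - q w| ≤ μ) :
    |(entropy p - entropy (fun y : β => ∑ x, p (x, y)))
        - (entropy q - entropy (fun y : β => ∑ x, q (x, y)))|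
      ≤ 2 * μ * logb 2 ((Fintype.card α : ℝ) * Fintype.card β / μ) := by
  have hμ0 : 0 ≤ μ := (sum_nonneg fun w _ => abs_nonneg _).trans hV
  have : Nonempty (α × β) :=
    univ_nonempty_iff.1 (nonempty_of_sum_ne_zero (hp1.trans_ne one_ne_zero))
  have hjoint := abs_entropy_sub_le hp0 hq0 hp1 hq1 hμ hV
  rw [Fintype.card_prod, Nat.cast_mul] at hjoint
  have hmarginal := abs_entropy_sub_le (fun y => sum_nonneg fun x _ => hp0 (x, y))
    (fun y => sum_nonneg fun x _ => hq0 (x, y)) (by rwa [← Fintype.sum_prod_type_right])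
    (by rwa [← Fintype.sum_prod_type_right]) hμ ((sum_abs_sub_marginal_le p q).trans hV)
  have hcard : μ * logb 2 (Fintype.card β / μ)
      ≤ μ * logb 2 ((Fintype.card α : ℝ) * Fintype.card β / μ) := by
    rcases hμ0.eq_or_lt with rfl | hμ0
    · simp
    have : Nonempty α := ⟨(Classical.arbitrary (α × β)).1⟩
    have : Nonempty β := ⟨(Classical.arbitrary (α × β)).2⟩
    gcongr
    · norm_num
    · exact le_mul_of_one_le_left (by positivity) (by exact_mod_cast Fintype.card_pos (α := α))
  calc _ = |(entropy p - entropy q)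
        - (entropy (fun y : β => ∑ x, p (x, y)) - entropy (fun y : β => ∑ x, q (x, y)))| := by
        congr 1
        ring
    _ ≤ _ := abs_sub _ _
    _ ≤ _ := add_le_add hjoint (hmarginal.trans hcard)
    _ = _ := by ring

theorem entropy_continuity_general {α α' β : Type*} [Fintype α] [Fintype α'] [Fintype β]
    (p q : α → ℝ)
    (hp0 : ∀ a, 0 ≤ p a) (hq0 : ∀ a, 0 ≤ q a)
    (hp1 : ∑ a, p a = 1) (hq1 : ∑ a, q a = 1)
    (μ : ℝ) (hμ : μ ≤ 1 / 2)
    (hV : ∑ a, |p a - q a| ≤ μ)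
    (pXY qXY : α' × β → ℝ)
    (hpXY0 : ∀ w, 0 ≤ pXY w) (hqXY0 : ∀ w, 0 ≤ qXY w)
    (hpXY1 : ∑ w, pXY w = 1) (hqXY1 : ∑ w, qXY w = 1)
    (hV2 : ∑ w, |pXY w - qXY w| ≤ μ) :
    |entropy p - entropy q| ≤ μ * Real.logb 2 ((Fintype.card α : ℝ) / μ) ∧
    |(entropy pXY - entropy (fun y : β => ∑ x, pXY (x, y)))
        - (entropy qXY - entropy (fun y : β => ∑ x, qXY (x, y)))|
      ≤ 2 * μ * Real.logb 2 (((Fintype.card α' : ℝ) * Fintype.card β) / μ) :=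
  ⟨abs_entropy_sub_le hp0 hq0 hp1 hq1 hμ hV,
    abs_condEntropy_sub_le hpXY0 hqXY0 hpXY1 hqXY1 hμ hV2⟩

/-- Continuity of entropy under variational distance: if `V(p,q) ≤ μ ≤ 1/2` on an
alphabet of size `m ≥ 4`, then `|H(p) − H(q)| ≤ μ log(m/μ)`; and for joint pmfs
`p_{XY}, q_{XY}` with `V ≤ μ ≤ 1/2`,
`|H_p(X|Y) − H_q(X|Y)| ≤ 2μ log(|X||Y|/μ)`. -/
theorem entropy_continuity {α α' β : Type*} [Fintype α] [Fintype α'] [Fintype β]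
    (hm : 4 ≤ Fintype.card α)
    (p q : α → ℝ)
    (hp0 : ∀ a, 0 ≤ p a) (hq0 : ∀ a, 0 ≤ q a)
    (hp1 : ∑ a, p a = 1) (hq1 : ∑ a, q a = 1)
    (μ : ℝ) (hμ : μ ≤ 1 / 2)
    (hV : ∑ a, |p a - q a| ≤ μ)
    (pXY qXY : α' × β → ℝ)
    (hpXY0 : ∀ w, 0 ≤ pXY w) (hqXY0 : ∀ w, 0 ≤ qXY w)
    (hpXY1 : ∑ w, pXY w = 1) (hqXY1 : ∑ w, qXY w = 1)
    (hV2 : ∑ w, |pXY w - qXY w| ≤ μ) :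
    |entropy p - entropy q| ≤ μ * Real.logb 2 ((Fintype.card α : ℝ) / μ) ∧
    |(entropy pXY - entropy (fun y : β => ∑ x, pXY (x, y)))
        - (entropy qXY - entropy (fun y : β => ∑ x, qXY (x, y)))|
      ≤ 2 * μ * Real.logb 2 (((Fintype.card α' : ℝ) * Fintype.card β) / μ) :=
  entropy_continuity_general p q hp0 hq0 hp1 hq1 μ hμ hV pXY qXY hpXY0 hqXY0 hpXY1 hqXY1 hV2
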